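/- arXiv:1012.5957 — 2 statements merged into one kernel-verified Lean document; each statement's English description precedes it below -/
import Mathlib

section
/- Let D^i × D^j be embedded in the boundary sphere of a closed disc D^N by a standard embedding (N > i + j), i.e. as a product of coordinate discs in a coordinate chart of ∂D^N = S^{N-1}. Then the quotient of D^N by the relation identifying (x,y) with (x,y') for all x ∈ D^i and y, y' ∈ D^j (collapsing the D^j factor on the embedded product) is homeomorphic to D^N. -/
open Metric

noncomputable section

/-- A standard embedding of `D^i × D^j` (a product of coordinate discs of radius `1/2`
in a coordinate chart of the boundary sphere `∂D^N = S^{N-1}`) into the unit sphere of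
`ℝ^N`: `(x, y) ↦ (x, y, 0, …, 0, √(1 - ‖x‖² - ‖y‖²))`. -/
def stdEmb (i j N : ℕ) (x : EuclideanSpace ℝ (Fin i)) (y : EuclideanSpace ℝ (Fin j)) :
    EuclideanSpace ℝ (Fin N) :=
  (WithLp.equiv 2 (Fin N → ℝ)).symm fun k =>
    if h : (k : ℕ) < i then x ⟨k, h⟩
    else if h2 : (k : ℕ) < i + j then y ⟨(k : ℕ) - i, by omega⟩
    else if (k : ℕ) = N - 1 then Real.sqrt (1 - ‖x‖ ^ 2 - ‖y‖ ^ 2) else 0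

/-- The relation on the closed disc `D^N` identifying `(x, y)` with `(x, y')` on the
standardly embedded product `D^i × D^j ⊆ ∂D^N`, i.e. collapsing the `D^j` factor. -/
def collapseRel (i j N : ℕ) (a b : ↥(closedBall (0 : EuclideanSpace ℝ (Fin N)) 1)) : Prop :=
  ∃ (x : EuclideanSpace ℝ (Fin i)) (y y' : EuclideanSpace ℝ (Fin j)),
    ‖x‖ ≤ 1 / 2 ∧ ‖y‖ ≤ 1 / 2 ∧ ‖y'‖ ≤ 1 / 2 ∧
    (a : EuclideanSpace ℝ (Fin N)) = stdEmb i j N x y ∧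
    (b : EuclideanSpace ℝ (Fin N)) = stdEmb i j N x y'

/-!
Write a point of `ℝ^{n+1}` as `(x, y, z, t)` with `x ∈ ℝ^i`, `y ∈ ℝ^j`, `t` the last coordinate.
The map `collapseMap` multiplies `y` by a weight `φ ∈ [0, 1]` and moves `t` so that `‖y‖² + t²`,
hence the norm, is unchanged. The weight vanishes exactly on the embedded `D^i × D^j` (where `y`
is therefore collapsed) and equals `1` for `t ≤ 3/5`. On a slice where `x`, `z` and `‖p‖` are
fixed, `‖y‖²` is transformed by `ξ ↦ φ(ξ)² ξ`, which maps `[0, S]` onto itself (intermediate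
value theorem) and is injective except on the initial interval where `φ = 0`, because `φ` grows
with `ξ`. So `collapseMap` is a continuous surjection of the closed ball onto itself whose fibres
are the classes of the collapsing relation, and a continuous bijection from a compact space to
a Hausdorff one is a homeomorphism.
-/

open Finset Function Set

section Topology

variable {X Y : Type*} [TopologicalSpace X] [CompactSpace X] [TopologicalSpace Y] [T2Space Y]

theorem nonempty_quot_homeomorph_of_surjective {r : X → X → Prop} {f : X → Y}
    (hf : Continuous f) (hsurj : Surjective f) (hr : ∀ a b, r a b → f a = f b)
    (hinj : ∀ a b, f a = f b → Quot.mk r a = Quot.mk r b) : Nonempty (Quot r ≃ₜ Y) := by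
  have hbij : Bijective (Quot.lift f hr) := by
    refine ⟨fun a b hab => ?_, fun y => ?_⟩
    · induction a using Quot.ind
      induction b using Quot.ind
      exact hinj _ _ hab
    · obtain ⟨x, rfl⟩ := hsurj y
      exact ⟨Quot.mk r x, rfl⟩
  exact ⟨(continuous_quot_lift hr hf).homeoOfEquivCompactToT2 (f := Equiv.ofBijective _ hbij)⟩

end Topology

namespace DiscCollapse

/-- On the embedded product `t = √(1 - ‖x‖² - ‖y‖²) ≥ √(1/2) > 7/10`, so the last summand
vanishes there. -/
def cutoff (c ξ t : ℝ) : ℝ := min 1 (10 * (c + max (ξ - 1 / 4) 0 + max (7 / 10 - t) 0))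

def height (c ξ t : ℝ) : ℝ := √(max t 0 ^ 2 + (1 - cutoff c ξ t ^ 2) * ξ) + min t 0

section Cutoff

variable {c ξ ξ' t t' : ℝ}

lemma cutoff_le_one : cutoff c ξ t ≤ 1 := min_le_left _ _

lemma cutoff_nonneg (hc : 0 ≤ c) : 0 ≤ cutoff c ξ t :=
  le_min zero_le_one (by positivity)

lemma cutoff_le_cutoff (hξ : ξ ≤ ξ') (ht : t' ≤ t) : cutoff c ξ t ≤ cutoff c ξ' t' := by
  unfold cutoff; gcongr

lemma cutoff_eq_one (hc : 0 ≤ c) (ht : t ≤ 3 / 5) : cutoff c ξ t = 1 :=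
  min_eq_left (by linarith [le_max_left (7 / 10 - t) 0, le_max_right (ξ - 1 / 4) 0])

lemma cutoff_eq_zero_iff (hc : 0 ≤ c) :
    cutoff c ξ t = 0 ↔ c = 0 ∧ ξ ≤ 1 / 4 ∧ 7 / 10 ≤ t := by
  have h₁ := le_max_left (ξ - 1 / 4) 0
  have h₂ := le_max_left (7 / 10 - t) 0
  have h₃ := le_max_right (ξ - 1 / 4) 0
  have h₄ := le_max_right (7 / 10 - t) 0
  constructor
  · intro h
    rcases min_choice 1 (10 * (c + max (ξ - 1 / 4) 0 + max (7 / 10 - t) 0)) with h' | h' <;>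
      rw [cutoff, h'] at h
    · norm_num at h
    · refine ⟨by linarith, by linarith, by linarith⟩
  · rintro ⟨rfl, hξ, ht⟩
    rw [cutoff, max_eq_right (by linarith), max_eq_right (by linarith)]
    norm_num

lemma height_of_cutoff_eq_one (h : cutoff c ξ t = 1) : height c ξ t = t := by
  rw [height, h]
  rcases le_total t 0 with ht | ht <;> simp [ht]

lemma height_of_neg (hc : 0 ≤ c) (ht : t < 0) : height c ξ t = t :=
  height_of_cutoff_eq_one (cutoff_eq_one hc (by linarith))

lemma height_of_nonneg (ht : 0 ≤ t) :
    height c ξ t = √(t ^ 2 + (1 - cutoff c ξ t ^ 2) * ξ) := by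
  simp [height, ht]

lemma height_zero_left : height c 0 t = t := by
  rcases le_total t 0 with ht | ht <;> simp [height, ht]

lemma height_neg_iff (hc : 0 ≤ c) : height c ξ t < 0 ↔ t < 0 := by
  refine ⟨fun h => not_le.1 fun ht => ?_, fun ht => (height_of_neg hc ht).symm ▸ ht⟩
  rw [height_of_nonneg ht] at h
  exact (Real.sqrt_nonneg _).not_gt h

lemma eq_or_eq_zero_of_sq_mul_eq {a b φ ψ : ℝ} (ha : 0 ≤ a) (hab : a ≤ b) (hφ : 0 ≤ φ)
    (hφψ : φ ≤ ψ) (h : φ ^ 2 * a = ψ ^ 2 * b) : a = b ∨ ψ = 0 := by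
  rcases hab.eq_or_lt with hab | hab
  · exact Or.inl hab
  refine Or.inr (pow_eq_zero_iff two_ne_zero |>.1 (le_antisymm ?_ (sq_nonneg ψ)))
  have : φ ^ 2 ≤ ψ ^ 2 := pow_le_pow_left₀ hφ hφψ 2
  nlinarith

lemma continuous_cutoff : Continuous fun x : ℝ × ℝ × ℝ => cutoff x.1 x.2.1 x.2.2 := by
  unfold cutoff; fun_prop

lemma continuous_height : Continuous fun x : ℝ × ℝ × ℝ => height x.1 x.2.1 x.2.2 := by
  unfold height; have := continuous_cutoff; fun_prop

lemma exists_cutoff_sq_mul_eq {S η : ℝ} (hc : 0 ≤ c) (hη : 0 ≤ η) (hηS : η ≤ S) :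
    ∃ ξ ∈ Icc 0 S, cutoff c ξ √(S - ξ) ^ 2 * ξ = η := by
  have hF : Continuous fun ξ => cutoff c ξ √(S - ξ) ^ 2 * ξ := by
    have := continuous_cutoff; fun_prop
  have hS : cutoff c S √(S - S) = 1 := cutoff_eq_one hc (by norm_num)
  refine intermediate_value_Icc (hη.trans hηS) hF.continuousOn ?_
  simpa only [mul_zero, hS, one_pow, one_mul] using ⟨hη, hηS⟩

end Cutoff

section Blocks

variable {m : ℕ} {a b : ℕ} {s : Finset (Fin m)} {p q : EuclideanSpace ℝ (Fin m)}

def blockIdx (a b : ℕ) : Finset (Fin m) := univ.filter fun k => a ≤ (k : ℕ) ∧ (k : ℕ) < a + b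

lemma mem_blockIdx {k : Fin m} : k ∈ blockIdx a b ↔ a ≤ (k : ℕ) ∧ (k : ℕ) < a + b := by
  simp [blockIdx]

def sqSum (s : Finset (Fin m)) (p : EuclideanSpace ℝ (Fin m)) : ℝ := ∑ k ∈ s, p k ^ 2

lemma sqSum_nonneg : 0 ≤ sqSum s p := sum_nonneg fun _ _ => sq_nonneg _

lemma sqSum_eq_zero_iff : sqSum s p = 0 ↔ ∀ k ∈ s, p k = 0 := by
  simp [sqSum, sum_eq_zero_iff_of_nonneg fun _ _ => sq_nonneg _]

lemma sqSum_congr (h : ∀ k ∈ s, p k = q k) : sqSum s p = sqSum s q :=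
  sum_congr rfl fun k hk => by rw [h k hk]

lemma continuous_sqSum : Continuous (sqSum s) := by
  unfold sqSum; fun_prop

def block (a b : ℕ) (h : a + b ≤ m) (p : EuclideanSpace ℝ (Fin m)) : EuclideanSpace ℝ (Fin b) :=
  WithLp.toLp 2 fun k => p ⟨a + k, by omega⟩

lemma block_apply (h : a + b ≤ m) (k : Fin b) : block a b h p k = p ⟨a + k, by omega⟩ := rfl

lemma norm_block_sq (h : a + b ≤ m) : ‖block a b h p‖ ^ 2 = sqSum (blockIdx a b) p := by
  rw [EuclideanSpace.real_norm_sq_eq, sqSum]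
  refine sum_bij (fun k _ => ⟨a + k, by omega⟩) (fun k _ => mem_blockIdx.2 (by simp))
    (fun k _ l _ hkl => by simpa [Fin.ext_iff] using hkl) (fun k hk => ?_) (fun _ _ => rfl)
  obtain ⟨h₁, h₂⟩ := mem_blockIdx.1 hk
  exact ⟨⟨k - a, by omega⟩, mem_univ _, Fin.ext (by simp only; omega)⟩

end Blocks

variable {n i j : ℕ} {s : Finset (Fin (n + 1))} {p q : EuclideanSpace ℝ (Fin (n + 1))} {a τ : ℝ}

lemma norm_sq_eq_sqSum_add (hij : i + j ≤ n) (p : EuclideanSpace ℝ (Fin (n + 1))) :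
    ‖p‖ ^ 2 = sqSum (blockIdx 0 i) p + sqSum (blockIdx i j) p +
      sqSum (blockIdx (i + j) (n - (i + j))) p + p (Fin.last n) ^ 2 := by
  rw [EuclideanSpace.real_norm_sq_eq, ← Fintype.sum_ite_eq' (Fin.last n) fun k => p k ^ 2]
  simp only [sqSum, blockIdx, sum_filter, ← sum_add_distrib]
  refine sum_congr rfl fun k _ => ?_
  have := k.isLt
  simp only [Fin.ext_iff, Fin.val_last]
  split_ifs <;> first | omega | ring

def reshape (i j : ℕ) (a τ : ℝ) (p : EuclideanSpace ℝ (Fin (n + 1))) :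
    EuclideanSpace ℝ (Fin (n + 1)) :=
  WithLp.toLp 2 fun k => if k ∈ blockIdx i j then a * p k else if k = Fin.last n then τ else p k

lemma reshape_apply (k : Fin (n + 1)) : reshape i j a τ p k =
    if k ∈ blockIdx i j then a * p k else if k = Fin.last n then τ else p k := rfl

lemma reshape_reshape {b σ : ℝ} :
    reshape i j a τ (reshape i j b σ p) = reshape i j (a * b) τ p := by
  ext k
  simp only [reshape_apply]
  split_ifs <;> ring

lemma reshape_eq_self (h : ∀ k ∈ blockIdx i j, a * p k = p k) :
    reshape i j a (p (Fin.last n)) p = p := by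
  ext k
  simp only [reshape_apply]
  split_ifs with hk hl
  · exact h k hk
  · rw [hl]
  · rfl

lemma reshape_last (hij : i + j ≤ n) : reshape i j a τ p (Fin.last n) = τ := by
  rw [reshape_apply, if_neg (by rw [mem_blockIdx, Fin.val_last]; omega), if_pos rfl]

lemma sqSum_reshape_of_forall (hs : ∀ k ∈ s, k ∉ blockIdx i j ∧ k ≠ Fin.last n) :
    sqSum s (reshape i j a τ p) = sqSum s p :=
  sqSum_congr fun k hk => by simp [reshape_apply, hs k hk]

lemma sqSum_blockIdx_reshape :
    sqSum (blockIdx i j) (reshape i j a τ p) = a ^ 2 * sqSum (blockIdx i j) p := by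
  rw [sqSum, sqSum, mul_sum]
  exact sum_congr rfl fun k hk => by rw [reshape_apply, if_pos hk]; ring

lemma continuous_reshape :
    Continuous fun x : ℝ × ℝ × EuclideanSpace ℝ (Fin (n + 1)) => reshape i j x.1 x.2.1 x.2.2 := by
  refine (PiLp.continuous_toLp 2 _).comp (continuous_pi fun k => ?_)
  split_ifs <;> fun_prop

lemma reshape_apply_of_lt (hij : i + j ≤ n) {k : Fin (n + 1)} (hk : (k : ℕ) < i) :
    reshape i j a τ p k = p k := by
  rw [reshape_apply, if_neg (by rw [mem_blockIdx]; omega),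
    if_neg (by rw [Fin.ext_iff, Fin.val_last]; omega)]

lemma sqSum_left_reshape (hij : i + j ≤ n) :
    sqSum (blockIdx 0 i) (reshape i j a τ p) = sqSum (blockIdx 0 i) p :=
  sqSum_congr fun k hk => reshape_apply_of_lt hij (by simpa [mem_blockIdx] using hk)

lemma sqSum_rest_reshape :
    sqSum (blockIdx (i + j) (n - (i + j))) (reshape i j a τ p) =
      sqSum (blockIdx (i + j) (n - (i + j))) p :=
  sqSum_reshape_of_forall fun k hk => by
    simp only [mem_blockIdx, ne_eq, Fin.ext_iff, Fin.val_last] at hk ⊢; omega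

lemma block_left_reshape (hij : i + j ≤ n) (h : 0 + i ≤ n + 1) :
    block 0 i h (reshape i j a τ p) = block 0 i h p := by
  ext k
  exact reshape_apply_of_lt hij (by simp)

def defect (i j : ℕ) (p : EuclideanSpace ℝ (Fin (n + 1))) : ℝ :=
  (1 - ‖p‖ ^ 2) + sqSum (blockIdx (i + j) (n - (i + j))) p +
    max (sqSum (blockIdx 0 i) p - 1 / 4) 0

def weight (i j : ℕ) (p : EuclideanSpace ℝ (Fin (n + 1))) : ℝ :=
  cutoff (defect i j p) (sqSum (blockIdx i j) p) (p (Fin.last n))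

def collapseMap (i j : ℕ) (p : EuclideanSpace ℝ (Fin (n + 1))) : EuclideanSpace ℝ (Fin (n + 1)) :=
  reshape i j (weight i j p) (height (defect i j p) (sqSum (blockIdx i j) p) (p (Fin.last n))) p

lemma defect_nonneg (hp : ‖p‖ ≤ 1) : 0 ≤ defect i j p := by
  have : ‖p‖ ^ 2 ≤ 1 := pow_le_one₀ (norm_nonneg p) hp
  have := le_max_right (sqSum (blockIdx 0 i) p - 1 / 4) 0
  have := sqSum_nonneg (s := blockIdx (i + j) (n - (i + j))) (p := p)
  rw [defect]; linarith

lemma weight_nonneg (hp : ‖p‖ ≤ 1) : 0 ≤ weight i j p := cutoff_nonneg (defect_nonneg hp)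

lemma collapseMap_of_weight_eq_one (h : weight i j p = 1) : collapseMap i j p = p := by
  rw [collapseMap, h, height_of_cutoff_eq_one h]
  exact reshape_eq_self fun _ _ => one_mul _

lemma collapseMap_of_last_neg (hp : ‖p‖ ≤ 1) (ht : p (Fin.last n) < 0) : collapseMap i j p = p :=
  collapseMap_of_weight_eq_one (cutoff_eq_one (defect_nonneg hp) (by linarith))

lemma collapseMap_of_sqSum_eq_zero (h : sqSum (blockIdx i j) p = 0) : collapseMap i j p = p := by
  rw [collapseMap, h, height_zero_left]
  exact reshape_eq_self fun k hk => by rw [sqSum_eq_zero_iff.1 h k hk, mul_zero]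

lemma collapseMap_last_neg_iff (hij : i + j ≤ n) (hp : ‖p‖ ≤ 1) :
    collapseMap i j p (Fin.last n) < 0 ↔ p (Fin.last n) < 0 := by
  rw [collapseMap, reshape_last hij]
  exact height_neg_iff (defect_nonneg hp)

lemma reshape_inv_collapseMap (h : weight i j p ≠ 0) :
    reshape i j (weight i j p)⁻¹ (p (Fin.last n)) (collapseMap i j p) = p := by
  rw [collapseMap, reshape_reshape, inv_mul_cancel₀ h]
  exact reshape_eq_self fun _ _ => one_mul _

lemma norm_collapseMap (hij : i + j ≤ n) (hp : ‖p‖ ≤ 1) : ‖collapseMap i j p‖ = ‖p‖ := by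
  rcases lt_or_ge (p (Fin.last n)) 0 with ht | ht
  · rw [collapseMap_of_last_neg hp ht]
  have hw₀ := weight_nonneg (i := i) (j := j) hp
  have hw₁ : weight i j p ≤ 1 := cutoff_le_one
  have hξ := sqSum_nonneg (s := blockIdx i j) (p := p)
  have : 0 ≤ (1 - weight i j p ^ 2) * sqSum (blockIdx i j) p :=
    mul_nonneg (by nlinarith) hξ
  rw [← sq_eq_sq₀ (norm_nonneg _) (norm_nonneg _), norm_sq_eq_sqSum_add hij,
    norm_sq_eq_sqSum_add hij p, collapseMap, sqSum_left_reshape hij, sqSum_rest_reshape,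
    sqSum_blockIdx_reshape, reshape_last hij, height_of_nonneg ht, Real.sq_sqrt (by positivity)]
  unfold weight
  ring

lemma defect_collapseMap (hij : i + j ≤ n) (hp : ‖p‖ ≤ 1) :
    defect i j (collapseMap i j p) = defect i j p := by
  rw [defect, defect, norm_collapseMap hij hp, collapseMap, sqSum_left_reshape hij,
    sqSum_rest_reshape]

lemma continuous_collapseMap : Continuous (collapseMap (n := n) i j) := by
  have := continuous_sqSum (s := blockIdx (m := n + 1) 0 i)
  have := continuous_sqSum (s := blockIdx (m := n + 1) i j)
  have := continuous_sqSum (s := blockIdx (m := n + 1) (i + j) (n - (i + j)))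
  have := continuous_cutoff
  have := continuous_height
  have := continuous_reshape (n := n) (i := i) (j := j)
  unfold collapseMap weight defect
  fun_prop

section StdEmb

variable {x : EuclideanSpace ℝ (Fin i)} {y : EuclideanSpace ℝ (Fin j)}

lemma stdEmb_apply (k : Fin (n + 1)) : stdEmb i j (n + 1) x y k =
    if h : (k : ℕ) < i then x ⟨k, h⟩
    else if h2 : (k : ℕ) < i + j then y ⟨(k : ℕ) - i, by omega⟩
    else if (k : ℕ) = n then √(1 - ‖x‖ ^ 2 - ‖y‖ ^ 2) else 0 := by
  simp [stdEmb]

lemma block_left_stdEmb (h : 0 + i ≤ n + 1) : block 0 i h (stdEmb i j (n + 1) x y) = x := by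
  ext k
  simp [block_apply, stdEmb_apply]

lemma block_right_stdEmb (h : i + j ≤ n + 1) : block i j h (stdEmb i j (n + 1) x y) = y := by
  ext k
  simp [block_apply, stdEmb_apply]

lemma sqSum_rest_stdEmb : sqSum (blockIdx (i + j) (n - (i + j))) (stdEmb i j (n + 1) x y) = 0 :=
  sqSum_eq_zero_iff.2 fun k hk => by
    rw [mem_blockIdx] at hk
    rw [stdEmb_apply, dif_neg (by omega), dif_neg (by omega), if_neg (by omega)]

lemma stdEmb_last (hij : i + j ≤ n) :
    stdEmb i j (n + 1) x y (Fin.last n) = √(1 - ‖x‖ ^ 2 - ‖y‖ ^ 2) := by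
  rw [stdEmb_apply, dif_neg (by rw [Fin.val_last]; omega), dif_neg (by rw [Fin.val_last]; omega),
    if_pos (Fin.val_last n)]

lemma collapseMap_stdEmb (hij : i + j ≤ n) (hx : ‖x‖ ≤ 1 / 2) (hy : ‖y‖ ≤ 1 / 2) :
    collapseMap i j (stdEmb i j (n + 1) x y) = stdEmb i j (n + 1) x 0 := by
  set p := stdEmb i j (n + 1) x y
  have hx' : sqSum (blockIdx 0 i) p = ‖x‖ ^ 2 := by
    rw [← norm_block_sq (by omega), block_left_stdEmb]
  have hy' : sqSum (blockIdx i j) p = ‖y‖ ^ 2 := by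
    rw [← norm_block_sq (by omega), block_right_stdEmb]
  have hx₂ : ‖x‖ ^ 2 ≤ 1 / 4 := by nlinarith [norm_nonneg x]
  have hy₂ : ‖y‖ ^ 2 ≤ 1 / 4 := by nlinarith [norm_nonneg y]
  have hnorm : ‖p‖ ^ 2 = 1 := by
    rw [norm_sq_eq_sqSum_add hij, hx', hy', sqSum_rest_stdEmb, stdEmb_last hij,
      Real.sq_sqrt (by linarith)]
    ring
  have hd : defect i j p = 0 := by
    rw [defect, hnorm, sqSum_rest_stdEmb, hx', max_eq_right (by linarith)]
    ring
  have ht : 7 / 10 ≤ p (Fin.last n) := by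
    rw [stdEmb_last hij]
    exact Real.le_sqrt_of_sq_le (by linarith)
  have hw : weight i j p = 0 := by
    rw [weight, hd, cutoff_eq_zero_iff le_rfl]
    exact ⟨rfl, hy' ▸ hy₂, ht⟩
  have hh : height (defect i j p) (sqSum (blockIdx i j) p) (p (Fin.last n)) =
      √(1 - ‖x‖ ^ 2) := by
    rw [height_of_nonneg (by linarith), ← weight, hw, hy', stdEmb_last hij,
      Real.sq_sqrt (by linarith)]
    ring_nf
  rw [collapseMap, hw, hh]
  ext k
  simp only [reshape_apply, stdEmb_apply, mem_blockIdx, Fin.ext_iff, Fin.val_last, p]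
  split_ifs <;> first | omega | simp

end StdEmb

lemma eq_stdEmb_of_weight_eq_zero (hij : i + j ≤ n) (hp : ‖p‖ ≤ 1) (hw : weight i j p = 0) :
    ‖block 0 i (by omega) p‖ ≤ 1 / 2 ∧ ‖block i j (by omega) p‖ ≤ 1 / 2 ∧
      p = stdEmb i j (n + 1) (block 0 i (by omega) p) (block i j (by omega) p) := by
  obtain ⟨hd, hy, ht⟩ := (cutoff_eq_zero_iff (defect_nonneg hp)).1 hw
  have hpyth := norm_sq_eq_sqSum_add hij p
  have hp₂ : ‖p‖ ^ 2 ≤ 1 := pow_le_one₀ (norm_nonneg p) hp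
  have hr₀ := sqSum_nonneg (s := blockIdx (i + j) (n - (i + j))) (p := p)
  have hx₁ := le_max_left (sqSum (blockIdx 0 i) p - 1 / 4) 0
  have hx₂ := le_max_right (sqSum (blockIdx 0 i) p - 1 / 4) 0
  rw [defect] at hd
  have hr : sqSum (blockIdx (i + j) (n - (i + j))) p = 0 := by linarith
  have hx : sqSum (blockIdx 0 i) p ≤ 1 / 4 := by linarith
  have ex : ‖block 0 i (by omega) p‖ ^ 2 = sqSum (blockIdx 0 i) p := norm_block_sq _
  have ey : ‖block i j (by omega) p‖ ^ 2 = sqSum (blockIdx i j) p := norm_block_sq _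
  refine ⟨by nlinarith [norm_nonneg (block 0 i (by omega) p)],
    by nlinarith [norm_nonneg (block i j (by omega) p)], ?_⟩
  ext k
  rw [stdEmb_apply]
  split_ifs with h₁ h₂ h₃
  · simp [block_apply]
  · rw [block_apply]
    exact congrArg (fun l => p l) (Fin.ext (by simp only; omega))
  · rw [ex, ey, show 1 - _ - _ = p (Fin.last n) ^ 2 by linarith, Real.sqrt_sq (by linarith)]
    exact congrArg (fun l => p l) (Fin.ext (by simpa using h₃))
  · exact sqSum_eq_zero_iff.1 hr k (mem_blockIdx.2 (by omega))

lemma sqSum_add_sq_last_eq_of_collapseMap_eq (hij : i + j ≤ n) (hp : ‖p‖ ≤ 1) (hq : ‖q‖ ≤ 1)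
    (hG : collapseMap i j p = collapseMap i j q) :
    sqSum (blockIdx i j) p + p (Fin.last n) ^ 2 = sqSum (blockIdx i j) q + q (Fin.last n) ^ 2 := by
  have hnorm : ‖p‖ = ‖q‖ := by
    rw [← norm_collapseMap hij hp, hG, norm_collapseMap hij hq]
  have hx : sqSum (blockIdx 0 i) p = sqSum (blockIdx 0 i) q := by
    simpa only [collapseMap, sqSum_left_reshape hij] using congrArg (sqSum (blockIdx 0 i)) hG
  have hr : sqSum (blockIdx (i + j) (n - (i + j))) p =
      sqSum (blockIdx (i + j) (n - (i + j))) q := by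
    simpa only [collapseMap, sqSum_rest_reshape] using
      congrArg (sqSum (blockIdx (i + j) (n - (i + j)))) hG
  have := norm_sq_eq_sqSum_add hij p
  have := norm_sq_eq_sqSum_add hij q
  rw [hnorm] at *
  linarith

lemma eq_or_weight_eq_zero_of_collapseMap_eq_of_le (hij : i + j ≤ n) (hp : ‖p‖ ≤ 1)
    (hq : ‖q‖ ≤ 1) (htp : 0 ≤ p (Fin.last n)) (htq : 0 ≤ q (Fin.last n))
    (hle : sqSum (blockIdx i j) p ≤ sqSum (blockIdx i j) q)
    (hG : collapseMap i j p = collapseMap i j q) :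
    p = q ∨ weight i j p = 0 ∧ weight i j q = 0 := by
  have hc : defect i j p = defect i j q := by
    rw [← defect_collapseMap hij hp, hG, defect_collapseMap hij hq]
  have hy : weight i j p ^ 2 * sqSum (blockIdx i j) p =
      weight i j q ^ 2 * sqSum (blockIdx i j) q := by
    simpa only [collapseMap, sqSum_blockIdx_reshape] using congrArg (sqSum (blockIdx i j)) hG
  have hsum := sqSum_add_sq_last_eq_of_collapseMap_eq hij hp hq hG
  have htt : q (Fin.last n) ≤ p (Fin.last n) :=
    (pow_le_pow_iff_left₀ htq htp two_ne_zero).1 (by linarith)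
  have hw : weight i j p ≤ weight i j q := by
    rw [weight, weight, hc]
    exact cutoff_le_cutoff hle htt
  rcases eq_or_eq_zero_of_sq_mul_eq sqSum_nonneg hle (weight_nonneg hp) hw hy with hξ | hwq
  · have ht : p (Fin.last n) = q (Fin.last n) :=
      (pow_left_inj₀ htp htq two_ne_zero).1 (by linarith)
    have hw' : weight i j p = weight i j q := by rw [weight, weight, hc, hξ, ht]
    by_cases hw₀ : weight i j p = 0
    · exact Or.inr ⟨hw₀, hw' ▸ hw₀⟩
    left
    calc p = reshape i j (weight i j p)⁻¹ (p (Fin.last n)) (collapseMap i j p) :=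
          (reshape_inv_collapseMap hw₀).symm
      _ = reshape i j (weight i j q)⁻¹ (q (Fin.last n)) (collapseMap i j q) := by rw [hw', ht, hG]
      _ = q := reshape_inv_collapseMap (hw' ▸ hw₀)
  · exact Or.inr ⟨le_antisymm (hwq ▸ hw) (weight_nonneg hp), hwq⟩

lemma eq_or_weight_eq_zero_of_collapseMap_eq (hij : i + j ≤ n) (hp : ‖p‖ ≤ 1) (hq : ‖q‖ ≤ 1)
    (hG : collapseMap i j p = collapseMap i j q) :
    p = q ∨ weight i j p = 0 ∧ weight i j q = 0 := by
  have hneg : p (Fin.last n) < 0 ↔ q (Fin.last n) < 0 := by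
    rw [← collapseMap_last_neg_iff hij hp, hG, collapseMap_last_neg_iff hij hq]
  by_cases htp : p (Fin.last n) < 0
  · left
    rw [← collapseMap_of_last_neg (i := i) (j := j) hp htp, hG,
      collapseMap_of_last_neg hq (hneg.1 htp)]
  have htq := not_lt.1 (hneg.not.1 htp)
  rw [not_lt] at htp
  rcases le_total (sqSum (blockIdx i j) p) (sqSum (blockIdx i j) q) with hle | hle
  · exact eq_or_weight_eq_zero_of_collapseMap_eq_of_le hij hp hq htp htq hle hG
  · rcases eq_or_weight_eq_zero_of_collapseMap_eq_of_le hij hq hp htq htp hle hG.symm with h | h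
    · exact Or.inl h.symm
    · exact Or.inr h.symm

lemma exists_collapseMap_eq_of_pos (hij : i + j ≤ n) (hq : ‖q‖ ≤ 1)
    (hv : 0 < sqSum (blockIdx i j) q) (ht : 0 ≤ q (Fin.last n)) :
    ∃ p, ‖p‖ ≤ 1 ∧ collapseMap i j p = q := by
  set c := defect i j q
  set η := sqSum (blockIdx i j) q
  set S := η + q (Fin.last n) ^ 2
  obtain ⟨ξ, ⟨hξ₀, hξS⟩, hξ⟩ := exists_cutoff_sq_mul_eq (defect_nonneg (i := i) (j := j) hq)
    hv.le (le_add_of_nonneg_right (sq_nonneg _) : η ≤ S)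
  set κ := √(ξ / η)
  set p := reshape i j κ √(S - ξ) q
  have hpy : sqSum (blockIdx i j) p = ξ := by
    rw [sqSum_blockIdx_reshape, Real.sq_sqrt (by positivity), div_mul_cancel₀ _ hv.ne']
  have hpt : p (Fin.last n) = √(S - ξ) := reshape_last hij
  have hnorm : ‖p‖ = ‖q‖ := by
    rw [← sq_eq_sq₀ (norm_nonneg _) (norm_nonneg _), norm_sq_eq_sqSum_add hij,
      norm_sq_eq_sqSum_add hij q, sqSum_left_reshape hij, sqSum_rest_reshape, hpy, hpt,
      Real.sq_sqrt (by linarith)]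
    ring
  have hpc : defect i j p = c := by
    rw [defect, hnorm, sqSum_left_reshape hij, sqSum_rest_reshape]
    rfl
  have hκ : weight i j p * κ = 1 := by
    rw [weight, hpc, hpy, hpt, ← Real.sqrt_sq (cutoff_nonneg (defect_nonneg hq)),
      ← Real.sqrt_mul (sq_nonneg _), ← mul_div_assoc, hξ, div_self hv.ne', Real.sqrt_one]
  have hh : height (defect i j p) (sqSum (blockIdx i j) p) (p (Fin.last n)) = q (Fin.last n) := by
    rw [hpc, hpy, hpt, height_of_nonneg (Real.sqrt_nonneg _), Real.sq_sqrt (by linarith),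
      show S - ξ + (1 - cutoff c ξ √(S - ξ) ^ 2) * ξ = q (Fin.last n) ^ 2 by linarith,
      Real.sqrt_sq ht]
  refine ⟨p, hnorm ▸ hq, ?_⟩
  rw [collapseMap, hh, reshape_reshape, hκ]
  exact reshape_eq_self fun _ _ => one_mul _

lemma exists_collapseMap_eq (hij : i + j ≤ n) (hq : ‖q‖ ≤ 1) :
    ∃ p, ‖p‖ ≤ 1 ∧ collapseMap i j p = q := by
  by_cases hv : sqSum (blockIdx i j) q = 0
  · exact ⟨q, hq, collapseMap_of_sqSum_eq_zero hv⟩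
  by_cases ht : q (Fin.last n) < 0
  · exact ⟨q, hq, collapseMap_of_last_neg hq ht⟩
  exact exists_collapseMap_eq_of_pos hij hq (lt_of_le_of_ne sqSum_nonneg (Ne.symm hv))
    (not_lt.1 ht)

lemma collapseRel_of_weight_eq_zero (hij : i + j ≤ n)
    {a b : closedBall (0 : EuclideanSpace ℝ (Fin (n + 1))) 1}
    (ha : weight i j (a : EuclideanSpace ℝ (Fin (n + 1))) = 0)
    (hb : weight i j (b : EuclideanSpace ℝ (Fin (n + 1))) = 0)
    (hG : collapseMap i j (a : EuclideanSpace ℝ (Fin (n + 1))) = collapseMap i j b) :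
    collapseRel i j (n + 1) a b := by
  obtain ⟨hxa, hya, hA⟩ := eq_stdEmb_of_weight_eq_zero hij (mem_closedBall_zero_iff.1 a.2) ha
  obtain ⟨-, hyb, hB⟩ := eq_stdEmb_of_weight_eq_zero hij (mem_closedBall_zero_iff.1 b.2) hb
  have hx : block (m := n + 1) 0 i (by omega) b = block (m := n + 1) 0 i (by omega) a := by
    have := congrArg (block (m := n + 1) 0 i (by omega)) hG.symm
    rwa [collapseMap, collapseMap, block_left_reshape hij, block_left_reshape hij] at this
  rw [hx] at hB
  exact ⟨_, _, _, hxa, hya, hyb, hA, hB⟩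

end DiscCollapse

open DiscCollapse in
/-- Collapsing the `D^j` factor of a standardly embedded product `D^i × D^j` inside the
boundary sphere of the closed disc `D^N` (`N > i + j`) yields a space homeomorphic
to `D^N`. -/
theorem stmt7 (i j N : ℕ) (h : i + j < N) :
    Nonempty (Quot (collapseRel i j N) ≃ₜ ↥(closedBall (0 : EuclideanSpace ℝ (Fin N)) 1)) := by
  obtain ⟨n, rfl⟩ : ∃ n, N = n + 1 := ⟨N - 1, by omega⟩
  have hij : i + j ≤ n := by omega
  have hmaps : MapsTo (collapseMap i j) (closedBall 0 1) (closedBall 0 1) := fun p hp => by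
    rw [mem_closedBall_zero_iff] at hp ⊢
    rwa [norm_collapseMap hij hp]
  refine nonempty_quot_homeomorph_of_surjective (f := hmaps.restrict _ _ _)
    (continuous_collapseMap.restrict hmaps) ?_ ?_ ?_
  · rintro ⟨q, hq⟩
    obtain ⟨p, hp, rfl⟩ := exists_collapseMap_eq hij (mem_closedBall_zero_iff.1 hq)
    exact ⟨⟨p, mem_closedBall_zero_iff.2 hp⟩, rfl⟩
  · rintro a b ⟨x, y, y', hx, hy, hy', ha, hb⟩
    ext1
    simp only [MapsTo.val_restrict_apply, ha, hb, collapseMap_stdEmb hij hx hy,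
      collapseMap_stdEmb hij hx hy']
  · intro a b hab
    have hG := congrArg Subtype.val hab
    rcases eq_or_weight_eq_zero_of_collapseMap_eq hij (mem_closedBall_zero_iff.1 a.2)
      (mem_closedBall_zero_iff.1 b.2) hG with h | ⟨ha, hb⟩
    · rw [Subtype.ext h]
    · exact Quot.sound (collapseRel_of_weight_eq_zero hij ha hb hG)
end
end

section
/- The n-simplex {(t₁,…,tₙ) : 0 ≤ t₁ ≤ … ≤ tₙ ≤ 1} can be subdivided into 2^{n-1} n-dimensional prisms, indexed by the objects of the poset Ξ_n (the (n−1)-cube poset): the piece indexed by a tuple with k blocks is homeomorphic to Δ^k × [0,1]^{n-k}, and these prisms are cut out by n−1 hyperplanes each containing a fixed line ℓ parallel to an edge e of the simplex and parallel to one of the n−1 facets containing e. -/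
/-!
Every piece is a compact convex subset of `ℝⁿ` with nonempty interior, and so is
`Δ^k × [0,1]^{n-k}` inside `ℝ^k × ℝ^{n-k}`; two such bodies in spaces of the same dimension
are homeomorphic by radial rescaling of gauges (`exists_homeomorph_image_eq`). The only
computation is an interior point of each piece: the configuration with increments
`c i / 2` across the hyperplanes indexed by `S` and `c i + δ` across the others, starting at `δ`,
which stays below `1` because `∑ c i < 1`.
-/


/-- `Δ(n) = {(t₁,…,tₙ) : 0 ≤ t₁ ≤ … ≤ tₙ ≤ 1}`, the `n`-dimensional simplex. -/
def orderedConfig (n : ℕ) : Set (Fin n → ℝ) :=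
  {t | Monotone t ∧ ∀ i, t i ∈ Set.Icc (0 : ℝ) 1}

/-- The `i`-th consecutive difference `t_{i+2} - t_{i+1}` of a configuration. -/
def diff (n : ℕ) (t : Fin n → ℝ) (i : Fin (n - 1)) : ℝ :=
  t ⟨(i : ℕ) + 1, by omega⟩ - t ⟨(i : ℕ), by omega⟩

/-- The prism of the subdivision indexed by the subset `S ⊆ {1,…,n-1}` (equivalently by
an ordered composition of `n`; the corresponding number of blocks is `k = n - #S`):
the part of the simplex cut out by the hyperplanes `t_{i+1} - t_i = c_i`.  Each such
hyperplane contains the line `ℓ` `{(a, a + c₁, a + c₁ + c₂, …)}` parallel to the edge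
`e` from `(0,…,0)` to `(1,…,1)` and is parallel to the facet `t_i = t_{i+1}`, one of
the `n-1` facets of the simplex containing `e`. -/
def prismPiece (n : ℕ) (c : Fin (n - 1) → ℝ) (S : Finset (Fin (n - 1))) :
    Set (Fin n → ℝ) :=
  {t ∈ orderedConfig n |
    ∀ i : Fin (n - 1), (i ∈ S → diff n t i ≤ c i) ∧ (i ∉ S → c i ≤ diff n t i)}

open Set Filter Topology Module

def Homeomorph.Set.univPi {ι : Type*} {X : ι → Type*} [∀ i, TopologicalSpace (X i)]
    (s : ∀ i, Set (X i)) : Set.pi _root_.Set.univ s ≃ₜ ∀ i, s i where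
  toEquiv := Equiv.Set.univPi s
  continuous_toFun :=
    continuous_pi fun i => ((continuous_apply i).comp continuous_subtype_val).subtype_mk _
  continuous_invFun :=
    (continuous_pi fun i => continuous_subtype_val.comp (continuous_apply i)).subtype_mk _

theorem nonempty_homeomorph_of_convex_of_isCompact {E F : Type*}
    [NormedAddCommGroup E] [NormedSpace ℝ E] [FiniteDimensional ℝ E]
    [NormedAddCommGroup F] [NormedSpace ℝ F] [FiniteDimensional ℝ F]
    (hEF : finrank ℝ E = finrank ℝ F) {s : Set E} {t : Set F}
    (hs : Convex ℝ s) (hsc : IsCompact s) (hsi : (interior s).Nonempty)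
    (ht : Convex ℝ t) (htc : IsCompact t) (hti : (interior t).Nonempty) :
    Nonempty (s ≃ₜ t) := by
  let A := ContinuousLinearEquiv.ofFinrankEq hEF
  let L := A.toHomeomorph
  have hLs : Convex ℝ (L '' s) := hs.linear_image A.toLinearMap
  have hLsc : IsCompact (L '' s) := hsc.image L.continuous
  have hLsi : (interior (L '' s)).Nonempty := by
    rw [← L.image_interior]
    exact hsi.image L
  obtain ⟨e, -, he, -⟩ := exists_homeomorph_image_eq hLs hLsi
    (NormedSpace.isVonNBounded_of_isBounded ℝ hLsc.isBounded) ht hti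
    (NormedSpace.isVonNBounded_of_isBounded ℝ htc.isBounded)
  rw [hLsc.isClosed.closure_eq, htc.isClosed.closure_eq] at he
  exact ⟨(L.image s).trans ((e.image _).trans (Homeomorph.setCongr he))⟩

section Simplex

variable {n : ℕ}

theorem continuous_diff (i : Fin (n - 1)) : Continuous fun t : Fin n → ℝ => diff n t i :=
  (continuous_apply _).sub (continuous_apply _)

theorem isLinearMap_diff (i : Fin (n - 1)) : IsLinearMap ℝ fun t : Fin n → ℝ => diff n t i where
  map_add x y := by simp only [diff, Pi.add_apply]; ring
  map_smul a x := by simp only [diff, Pi.smul_apply, smul_eq_mul]; ring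

theorem monotone_iff_forall_diff_nonneg {t : Fin n → ℝ} : Monotone t ↔ ∀ i, 0 ≤ diff n t i := by
  cases n with
  | zero => exact iff_of_true (Subsingleton.monotone t) fun i => i.elim0
  | succ m =>
    rw [Fin.monotone_iff_le_succ]
    exact forall_congr' fun i => sub_nonneg.symm

theorem orderedConfig_eq_inter :
    orderedConfig n = {t | Monotone t} ∩ pi univ fun _ => Icc 0 1 := by
  ext t
  simp only [orderedConfig, mem_ofPred_eq, mem_inter_iff, mem_univ_pi]

theorem isCompact_orderedConfig : IsCompact (orderedConfig n) := by
  rw [orderedConfig_eq_inter]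
  exact (isCompact_univ_pi fun _ => isCompact_Icc).inter_left isClosed_monotone

theorem convex_orderedConfig : Convex ℝ (orderedConfig n) := by
  rw [orderedConfig_eq_inter]
  refine Convex.inter (fun x hx y hy a b ha hb _ => ?_) (convex_pi fun _ _ => convex_Icc 0 1)
  exact (Monotone.const_smul hx ha).add (Monotone.const_smul hy hb)

end Simplex

section Prism

variable {n : ℕ} {c : Fin (n - 1) → ℝ} {S : Finset (Fin (n - 1))}

def prismHalfSpace (n : ℕ) (c : Fin (n - 1) → ℝ) (S : Finset (Fin (n - 1))) (i : Fin (n - 1)) :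
    Set (Fin n → ℝ) :=
  if i ∈ S then {t | diff n t i ≤ c i} else {t | c i ≤ diff n t i}

theorem prismPiece_eq_inter :
    prismPiece n c S = orderedConfig n ∩ ⋂ i, prismHalfSpace n c S i := by
  ext t
  simp only [prismPiece, prismHalfSpace, mem_inter_iff, mem_iInter, mem_sep_iff]
  refine and_congr_right fun _ => forall_congr' fun i => ?_
  split_ifs with hi <;> simp [hi]

theorem isClosed_prismHalfSpace (i : Fin (n - 1)) : IsClosed (prismHalfSpace n c S i) := by
  unfold prismHalfSpace
  split_ifs
  exacts [isClosed_le (continuous_diff i) continuous_const,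
    isClosed_le continuous_const (continuous_diff i)]

theorem convex_prismHalfSpace (i : Fin (n - 1)) : Convex ℝ (prismHalfSpace n c S i) := by
  unfold prismHalfSpace
  split_ifs
  exacts [convex_halfSpace_le (isLinearMap_diff i) _, convex_halfSpace_ge (isLinearMap_diff i) _]

theorem isCompact_prismPiece : IsCompact (prismPiece n c S) := by
  rw [prismPiece_eq_inter]
  exact isCompact_orderedConfig.inter_right (isClosed_iInter isClosed_prismHalfSpace)

theorem convex_prismPiece : Convex ℝ (prismPiece n c S) := by
  rw [prismPiece_eq_inter]
  exact convex_orderedConfig.inter (convex_iInter convex_prismHalfSpace)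

theorem prismPiece_zero_empty : prismPiece n 0 ∅ = orderedConfig n := by
  ext t
  simp only [prismPiece, mem_sep_iff, Finset.notMem_empty, false_imp_iff, true_and,
    not_false_eq_true, true_imp_iff, Pi.zero_apply, and_iff_left_iff_imp]
  exact fun ht => monotone_iff_forall_diff_nonneg.1 ht.1

theorem iUnion_prismPiece (c : Fin (n - 1) → ℝ) : ⋃ S, prismPiece n c S = orderedConfig n := by
  classical
  refine (iUnion_subset fun S t ht => ht.1).antisymm fun t ht => ?_
  refine mem_iUnion.2 ⟨Finset.univ.filter fun i => diff n t i ≤ c i, ht,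
    fun i => ⟨fun hi => ?_, fun hi => ?_⟩⟩
  · exact (Finset.mem_filter.1 hi).2
  · exact (not_le.1 fun h => hi (Finset.mem_filter.2 ⟨Finset.mem_univ _, h⟩)).le

theorem mem_interior_prismPiece {t : Fin n → ℝ} (hdiff : ∀ i, 0 < diff n t i)
    (hI : ∀ j, t j ∈ Ioo 0 1) (hS : ∀ i ∈ S, diff n t i < c i) (hSc : ∀ i ∉ S, c i < diff n t i) :
    t ∈ interior (prismPiece n c S) := by
  rw [mem_interior_iff_mem_nhds]
  have hd i : ContinuousAt (fun s : Fin n → ℝ => diff n s i) t := (continuous_diff i).continuousAt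
  have hmono : ∀ᶠ s in 𝓝 t, ∀ i, 0 ≤ diff n s i := eventually_all.2 fun i =>
    (continuousAt_const.eventually_lt (hd i) (hdiff i)).mono fun _ => le_of_lt
  have hcube : ∀ᶠ s in 𝓝 t, ∀ j, s j ∈ Icc (0 : ℝ) 1 := eventually_all.2 fun j =>
    ((continuous_apply j).continuousAt.eventually_mem (Ioo_mem_nhds (hI j).1 (hI j).2)).mono
      fun _ hs => Ioo_subset_Icc_self hs
  have hcut : ∀ᶠ s in 𝓝 t, ∀ i, (i ∈ S → diff n s i ≤ c i) ∧ (i ∉ S → c i ≤ diff n s i) :=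
    eventually_all.2 fun i => by
      by_cases hi : i ∈ S
      · filter_upwards [(hd i).eventually_lt continuousAt_const (hS i hi)] with s hs
        exact ⟨fun _ => hs.le, fun h => (h hi).elim⟩
      · filter_upwards [continuousAt_const.eventually_lt (hd i) (hSc i hi)] with s hs
        exact ⟨fun h => (hi h).elim, fun _ => hs.le⟩
  filter_upwards [hmono, hcube, hcut] with s hs₁ hs₂ hs₃
  exact ⟨⟨monotone_iff_forall_diff_nonneg.2 hs₁, hs₂⟩, hs₃⟩

theorem exists_diff_eq {m : ℕ} (a : ℝ) (d : Fin m → ℝ) :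
    ∃ t : Fin (m + 1) → ℝ, t 0 = a ∧ t (Fin.last m) = a + ∑ i, d i ∧
      ∀ i, diff (m + 1) t i = d i := by
  refine ⟨fun j => a + Fin.partialSum d j, by simp, ?_, fun i => ?_⟩
  · simp [Fin.partialSum, List.take_of_length_le, List.sum_ofFn]
  · show a + Fin.partialSum d i.succ - (a + Fin.partialSum d i.castSucc) = d i
    rw [Fin.partialSum_succ]
    ring

theorem interior_prismPiece_nonempty (hc : ∀ i ∈ S, 0 < c i) (hsum : ∑ i, |c i| < 1) :
    (interior (prismPiece n c S)).Nonempty := by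
  cases n with
  | zero => exact ⟨0, mem_interior_prismPiece (fun i => i.elim0) (fun j => j.elim0)
      (fun i => i.elim0) (fun i => i.elim0)⟩
  | succ m =>
    -- `Fin (m + 1 - 1)` is `Fin m` only up to unfolding, so the sums are stated over `Fin m`.
    obtain ⟨δ, hδ, hδsum⟩ :=
      exists_pos_mul_lt (a := 1 - ∑ i : Fin m, |c i|) (sub_pos.2 hsum) ((m : ℝ) + 2)
    let d : Fin m → ℝ := fun i => if i ∈ S then c i / 2 else |c i| + δ
    have hd_pos i : 0 < d i := by
      by_cases hi : i ∈ S <;> simp only [d, hi, if_true, if_false]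
      exacts [half_pos (hc i hi), by positivity]
    have hd_le i : d i ≤ |c i| + δ := by
      by_cases hi : i ∈ S <;> simp only [d, hi, if_true, if_false, le_refl]
      linarith [hc i hi, le_abs_self (c i)]
    obtain ⟨t, ht₀, htlast, htd⟩ := exists_diff_eq δ d
    have ht_mono : Monotone t := monotone_iff_forall_diff_nonneg.2 fun i => htd i ▸ (hd_pos i).le
    have hlast : t (Fin.last m) < 1 := calc
      t (Fin.last m) = δ + ∑ i, d i := htlast
      _ ≤ δ + ∑ i : Fin m, (|c i| + δ) := by gcongr with i; exact hd_le i
      _ = ∑ i : Fin m, |c i| + (m + 1) * δ := by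
        simp only [Finset.sum_add_distrib, Finset.sum_const, Finset.card_univ, Fintype.card_fin,
          nsmul_eq_mul]
        ring
      _ < 1 := by linarith
    refine ⟨t, mem_interior_prismPiece (fun i => htd i ▸ hd_pos i) (fun j => ⟨?_, ?_⟩)
      (fun i hi => ?_) (fun i hi => ?_)⟩
    · exact hδ.trans_le (ht₀ ▸ ht_mono (Fin.zero_le j))
    · exact (ht_mono (Fin.le_last j)).trans_lt hlast
    · rw [htd i]
      simp only [d, hi, if_true]
      linarith [hc i hi]
    · rw [htd i]
      simp only [d, hi, if_false]
      linarith [le_abs_self (c i)]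

theorem nonempty_homeomorph_prismPiece (hc : ∀ i ∈ S, 0 < c i) (hsum : ∑ i, |c i| < 1) :
    Nonempty (prismPiece n c S ≃ₜ
      orderedConfig (n - S.card) × (Fin S.card → Icc (0 : ℝ) 1)) := by
  have hS : S.card ≤ n := (Finset.card_le_univ S).trans (by simp)
  let cube := pi univ fun _ : Fin S.card => Icc (0 : ℝ) 1
  have hdim : finrank ℝ (Fin n → ℝ) =
      finrank ℝ ((Fin (n - S.card) → ℝ) × (Fin S.card → ℝ)) := by
    rw [finrank_prod, finrank_fin_fun, finrank_fin_fun, finrank_fin_fun]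
    omega
  have hsimplex : (interior (orderedConfig (n - S.card))).Nonempty := by
    rw [← prismPiece_zero_empty]
    exact interior_prismPiece_nonempty (by simp) (by simp)
  obtain ⟨h⟩ := nonempty_homeomorph_of_convex_of_isCompact
    (t := orderedConfig (n - S.card) ×ˢ cube) hdim
    convex_prismPiece isCompact_prismPiece (interior_prismPiece_nonempty hc hsum)
    (convex_orderedConfig.prod (convex_pi fun _ _ => convex_Icc 0 1))
    (isCompact_orderedConfig.prod (isCompact_univ_pi fun _ => isCompact_Icc))
    (by
      rw [interior_prod_eq, interior_pi_set finite_univ]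
      exact hsimplex.prod ⟨fun _ => 1 / 2, fun _ _ => by norm_num [interior_Icc]⟩)
  exact ⟨h.trans ((Homeomorph.Set.prod _ _).trans
    ((Homeomorph.refl _).prodCongr (Homeomorph.Set.univPi _)))⟩

end Prism

theorem stmt14_general (n : ℕ)
    (c : Fin (n - 1) → ℝ) (hc : ∀ i, 0 < c i) (hsum : ∑ i, c i < 1) :
    (⋃ S : Finset (Fin (n - 1)), prismPiece n c S) = orderedConfig n ∧
    ∀ S : Finset (Fin (n - 1)),
      Nonempty (↥(prismPiece n c S) ≃ₜ
        (↥(orderedConfig (n - S.card)) × (Fin S.card → ↥(Set.Icc (0 : ℝ) 1)))) := by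
  have habs : ∑ i, |c i| = ∑ i, c i := Finset.sum_congr rfl fun i _ => abs_of_pos (hc i)
  exact ⟨iUnion_prismPiece c,
    fun S => nonempty_homeomorph_prismPiece (fun i _ => hc i) (habs ▸ hsum)⟩

/-- The `n`-simplex `{0 ≤ t₁ ≤ … ≤ tₙ ≤ 1}` is subdivided into `2^{n-1}` `n`-dimensional
prisms indexed by the subsets `S` of `{1,…,n-1}` (i.e. by the objects of the
`(n-1)`-cube poset `Ξ_n` of ordered compositions of `n`), cut out by the `n-1`
hyperplanes `t_{i+1} - t_i = c_i`, each containing the fixed line `ℓ` (parallel to the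
edge `e` of the simplex and meeting its interior) and parallel to one of the `n-1`
facets of the simplex containing `e`: the pieces cover the simplex, and the piece
indexed by a composition with `k = n - #S` blocks is homeomorphic to
`Δ^k × [0,1]^{n-k}`. -/
theorem stmt14 (n : ℕ) (hn : 1 ≤ n)
    (c : Fin (n - 1) → ℝ) (hc : ∀ i, 0 < c i) (hsum : ∑ i, c i < 1) :
    (⋃ S : Finset (Fin (n - 1)), prismPiece n c S) = orderedConfig n ∧
    ∀ S : Finset (Fin (n - 1)),
      Nonempty (↥(prismPiece n c S) ≃ₜ
        (↥(orderedConfig (n - S.card)) × (Fin S.card → ↥(Set.Icc (0 : ℝ) 1)))) :=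
  stmt14_general n c hc hsum
end
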